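/- arXiv:1708.02278 — 2 statements merged into one kernel-verified Lean document; each statement's English description precedes it below -/
import Mathlib

section
/- Let b_1, …, b_r be a T-chain with parameters (d, n, a). Then d ≤ r. Moreover, the following are equivalent: (i) d = r; (ii) n = 2; (iii) the chain is [4] (when r = 1) or [3, 2, …, 2, 3] with r − 2 middle entries equal to 2 (when r ≥ 2). -/
/-- Hirzebruch–Jung continued fraction of a list of integers:
`hjcf [] = 0` (junk value), `hjcf (b :: l) = b - 1 / hjcf l`.
Since `(0 : ℚ)⁻¹ = 0`, this gives `hjcf [b] = b`, matching the recursion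
`[b_r] = b_r`, `[b_1, …, b_r] = b_1 − 1/[b_2, …, b_r]`. -/
def hjcf : List ℤ → ℚ
  | [] => 0
  | b :: l => (b : ℚ) - (hjcf l)⁻¹

/-- `IsTChain l d n a` : the nonempty list `l` of integers, all ≥ 2, is a T-chain
with parameters `(d, n, a)`, i.e. its Hirzebruch–Jung continued fraction equals
`d n² / (d n a − 1)` where `d ≥ 1`, `n ≥ 2`, `0 < a < n`, `gcd(n, a) = 1`. -/
def IsTChain (l : List ℤ) (d n a : ℤ) : Prop :=
  l ≠ [] ∧ (∀ b ∈ l, 2 ≤ b) ∧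
  1 ≤ d ∧ 2 ≤ n ∧ 0 < a ∧ a < n ∧ Int.gcd n a = 1 ∧
  hjcf l = (d * n ^ 2 : ℚ) / (d * n * a - 1)

/-!
Encode `[b₁, …, b_r]` by the product `hjMat` of the matrices `!![bᵢ, -1; 1, 0]`: its first column
`(A, C)` gives `[b₁, …, b_r] = A / C`, its determinant is `1`, and all entries `≥ 2` force
`0 ≤ C < A`. For a T-chain, `(A, C) = (d n², d n a - 1)`, and the bounds on the second column pin
the whole matrix down to `tMatrix d n a`. Reversing the chain transposes this matrix up to signs,
so the reversed chain is a T-chain with parameters `(d, n, n - a)`.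

If `n > 2` then `n ≠ 2a` by coprimality, so up to reversal `n < 2a`. Then the chain is
`[2, …, x]` with `x ≥ 3`, and `[…, x - 1]` (drop the leading `2`) is a T-chain with parameters
`(d, a, 2a - n)` and one entry fewer. Iterating ends at `n = 2`, where `tMatrix d 2 1` is the
matrix of `[4]` or `[3, 2, …, 2, 3]` of length `d`, and a chain with entries `≥ 2` is determined
by its matrix. So the length is `d` plus the number of reduction steps.
-/

open Matrix

def hjStep (b : ℤ) : Matrix (Fin 2) (Fin 2) ℤ := !![b, -1; 1, 0]

def hjMat (l : List ℤ) : Matrix (Fin 2) (Fin 2) ℤ := (l.map hjStep).prod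

def tMatrix (d n a : ℤ) : Matrix (Fin 2) (Fin 2) ℤ :=
  !![d * n ^ 2, 1 - d * n * (n - a); d * n * a - 1, 1 - d * a * (n - a)]

@[simp] lemma hjMat_nil : hjMat [] = 1 := rfl

@[simp] lemma hjMat_cons (b : ℤ) (l : List ℤ) : hjMat (b :: l) = hjStep b * hjMat l := rfl

@[simp] lemma hjMat_append (l l' : List ℤ) : hjMat (l ++ l') = hjMat l * hjMat l' := by
  simp [hjMat]

lemma hjMat_cons_apply (b : ℤ) (l : List ℤ) :
    hjMat (b :: l) = !![b * hjMat l 0 0 - hjMat l 1 0, b * hjMat l 0 1 - hjMat l 1 1;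
      hjMat l 0 0, hjMat l 0 1] := by
  ext i j; fin_cases i <;> fin_cases j <;>
    simp [hjStep, Matrix.mul_apply, Fin.sum_univ_two, sub_eq_add_neg]

lemma det_hjMat (l : List ℤ) : (hjMat l).det = 1 := by
  induction l with
  | nil => simp
  | cons b l ih => rw [hjMat_cons, det_mul, ih, hjStep, det_fin_two_of]; ring

lemma hjMat_reverse (l : List ℤ) :
    hjMat l.reverse = !![hjMat l 0 0, -hjMat l 1 0; -hjMat l 0 1, hjMat l 1 1] := by
  induction l with
  | nil => ext i j; fin_cases i <;> fin_cases j <;> rfl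
  | cons b l ih =>
    rw [List.reverse_cons, hjMat_append, ih, hjMat_cons_apply]
    ext i j; fin_cases i <;> fin_cases j <;>
      simp [hjStep, Matrix.mul_apply, Fin.sum_univ_two] <;> ring

lemma hjMat_bounds {l : List ℤ} (hl : ∀ b ∈ l, 2 ≤ b) :
    0 ≤ hjMat l 1 0 ∧ hjMat l 1 0 < hjMat l 0 0 := by
  induction l with
  | nil => simp
  | cons b l ih =>
    obtain ⟨h0, h1⟩ := ih fun c hc => hl c (List.mem_cons_of_mem b hc)
    have hb := hl b List.mem_cons_self
    simp only [hjMat_cons_apply, of_apply, cons_val_zero, cons_val_one]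
    constructor <;> nlinarith

lemma hjMat_cons_bounds {b : ℤ} {l : List ℤ} (hl : ∀ c ∈ l, 2 ≤ c) :
    (b - 1) * hjMat (b :: l) 1 0 < hjMat (b :: l) 0 0 ∧
      hjMat (b :: l) 0 0 ≤ b * hjMat (b :: l) 1 0 := by
  obtain ⟨h0, h1⟩ := hjMat_bounds hl
  simp only [hjMat_cons_apply, of_apply, cons_val_zero, cons_val_one]
  constructor <;> linarith

lemma one_le_hjMat_one_zero {l : List ℤ} (hl : ∀ b ∈ l, 2 ≤ b) (hne : l ≠ []) :
    1 ≤ hjMat l 1 0 := by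
  obtain ⟨b, t, rfl⟩ := List.exists_cons_of_ne_nil hne
  obtain ⟨h0, h1⟩ := hjMat_bounds fun c hc => hl c (List.mem_cons_of_mem b hc)
  simp only [hjMat_cons_apply, of_apply, cons_val_zero, cons_val_one]
  omega

lemma hjMat_zero_one_bounds {l : List ℤ} (hl : ∀ b ∈ l, 2 ≤ b) (hne : l ≠ []) :
    -hjMat l 0 0 < hjMat l 0 1 ∧ hjMat l 0 1 ≤ -1 := by
  have hrl : ∀ b ∈ l.reverse, 2 ≤ b := fun b hb => hl b (List.mem_reverse.mp hb)
  have h1 := one_le_hjMat_one_zero hrl (List.reverse_ne_nil_iff.mpr hne)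
  have h2 := (hjMat_bounds hrl).2
  simp only [hjMat_reverse, of_apply, cons_val_zero, cons_val_one] at h1 h2
  constructor <;> linarith

lemma hjcf_eq_div {l : List ℤ} (hl : ∀ b ∈ l, 2 ≤ b) :
    hjcf l = (hjMat l 0 0 : ℚ) / hjMat l 1 0 := by
  induction l with
  | nil => simp [hjcf]
  | cons b l ih =>
    have hA : (hjMat l 0 0 : ℚ) ≠ 0 := by
      have := hjMat_bounds fun c hc => hl c (List.mem_cons_of_mem b hc)
      exact_mod_cast (by omega : hjMat l 0 0 ≠ 0)
    rw [hjcf, ih fun c hc => hl c (List.mem_cons_of_mem b hc)]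
    simp only [hjMat_cons_apply, of_apply, cons_val_zero, cons_val_one]
    field_simp
    push_cast
    ring

lemma eq_of_hjMat_eq {l l' : List ℤ} (hl : ∀ b ∈ l, 2 ≤ b) (hl' : ∀ b ∈ l', 2 ≤ b)
    (h : hjMat l = hjMat l') : l = l' := by
  induction l generalizing l' with
  | nil =>
    by_contra hne
    have := one_le_hjMat_one_zero hl' (Ne.symm hne)
    rw [← h] at this
    simp at this
  | cons b t ih =>
    cases l' with
    | nil =>
      have := one_le_hjMat_one_zero hl (List.cons_ne_nil b t)
      rw [h] at this
      simp at this
    | cons b' t' =>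
      have ht : ∀ c ∈ t, 2 ≤ c := fun c hc => hl c (List.mem_cons_of_mem b hc)
      have ht' : ∀ c ∈ t', 2 ≤ c := fun c hc => hl' c (List.mem_cons_of_mem b' hc)
      obtain ⟨hlo, hhi⟩ := hjMat_cons_bounds (b := b) ht
      obtain ⟨hlo', hhi'⟩ := hjMat_cons_bounds (b := b') ht'
      have hC := one_le_hjMat_one_zero hl (List.cons_ne_nil b t)
      rw [h] at hlo hhi hC
      have hb : b = b' := by apply le_antisymm <;> by_contra! <;> nlinarith
      subst hb
      have hunit : IsUnit (hjStep b) :=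
        (isUnit_iff_isUnit_det _).mpr (by simp [hjStep, det_fin_two_of])
      rw [ih ht ht' (hunit.mul_left_cancel h)]

lemma two_le_mul_mul {d n a : ℤ} (hd : 1 ≤ d) (ha : 0 < a) (han : a < n) : 2 ≤ d * n * a := by
  have hdn : 2 ≤ d * n := by nlinarith
  nlinarith

lemma hjMat_eq_tMatrix {l : List ℤ} {d n a : ℤ} (hl : ∀ b ∈ l, 2 ≤ b) (hd : 1 ≤ d)
    (ha : 0 < a) (han : a < n) (hA : hjMat l 0 0 = d * n ^ 2)
    (hC : hjMat l 1 0 = d * n * a - 1) : hjMat l = tMatrix d n a := by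
  have hne : l ≠ [] := by
    rintro rfl
    simp at hC
    linarith [two_le_mul_mul hd ha han]
  have hdet : hjMat l 0 0 * hjMat l 1 1 - hjMat l 0 1 * hjMat l 1 0 = 1 := by
    rw [← det_fin_two]; exact det_hjMat l
  obtain ⟨hB0, hB1⟩ := hjMat_zero_one_bounds hl hne
  -- `hjMat l 0 1` and `1 - d n (n - a)` are both inverse to `-(d n a - 1)` modulo `d n ^ 2`,
  -- and both lie in `(-d n ^ 2, 0)`.
  have hB : hjMat l 0 1 = 1 - d * n * (n - a) := by
    have hcop : IsCoprime (d * n ^ 2) (d * n * a - 1) := by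
      rw [← hA, ← hC]; exact ⟨hjMat l 1 1, -hjMat l 0 1, by linarith⟩
    have hdvd : d * n ^ 2 ∣ hjMat l 0 1 - (1 - d * n * (n - a)) := by
      refine hcop.dvd_of_dvd_mul_left ⟨hjMat l 1 1 - (1 - d * a * (n - a)), ?_⟩
      rw [hA, hC] at hdet
      linear_combination -hdet
    have := Int.eq_zero_of_abs_lt_dvd hdvd (by
      rw [abs_lt]; constructor <;> nlinarith)
    linarith
  have hD : hjMat l 1 1 = 1 - d * a * (n - a) := by
    have hA0 : d * n ^ 2 ≠ 0 := by
      have : 0 < n := by omega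
      positivity
    refine mul_left_cancel₀ hA0 ?_
    rw [hA, hB, hC] at hdet
    linear_combination hdet
  ext i j; fin_cases i <;> fin_cases j <;> simp [tMatrix, hA, hB, hC, hD]

lemma isTChain_iff_hjMat {l : List ℤ} {d n a : ℤ} :
    IsTChain l d n a ↔ (∀ b ∈ l, 2 ≤ b) ∧ 1 ≤ d ∧ 0 < a ∧ a < n ∧ IsCoprime n a ∧
      hjMat l = tMatrix d n a := by
  rw [Int.isCoprime_iff_gcd_eq_one]
  constructor
  · rintro ⟨hne, hl, hd, hn, ha, han, hna, hval⟩
    refine ⟨hl, hd, ha, han, hna, ?_⟩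
    have hcop := Int.isCoprime_iff_gcd_eq_one.mp (show IsCoprime (hjMat l 0 0) (hjMat l 1 0) from
      ⟨hjMat l 1 1, -hjMat l 0 1, by rw [← det_hjMat l, det_fin_two]; ring⟩)
    have htcop := Int.isCoprime_iff_gcd_eq_one.mp (show IsCoprime (d * n ^ 2) (d * n * a - 1) from
      ⟨1 - d * a * (n - a), -(1 - d * n * (n - a)), by ring⟩)
    rw [Int.gcd_eq_natAbs] at hcop htcop
    rw [hjcf_eq_div hl] at hval
    obtain ⟨hA, hC⟩ := Rat.div_int_inj (one_le_hjMat_one_zero hl hne)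
      (by linarith [two_le_mul_mul hd ha han]) hcop htcop (by exact_mod_cast hval)
    exact hjMat_eq_tMatrix hl hd ha han hA hC
  · rintro ⟨hl, hd, ha, han, hna, hM⟩
    have hC := two_le_mul_mul hd ha han
    refine ⟨?_, hl, hd, by omega, ha, han, hna, ?_⟩
    · rintro rfl
      have := congrFun (congrFun hM 1) 0
      simp [tMatrix] at this
      omega
    · rw [hjcf_eq_div hl, hM]
      simp [tMatrix]

lemma hjMat_shorten (s : List ℤ) (x : ℤ) :
    hjMat (s ++ [x - 1]) = !![0, 1; -1, 2] * hjMat (2 :: (s ++ [x])) * !![1, 0; 1, 1] := by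
  have hstep : hjStep (x - 1) = hjStep x * !![1, 0; 1, 1] := by
    ext i j; fin_cases i <;> fin_cases j <;> simp [hjStep, sub_eq_add_neg]
  have hinv : !![0, 1; -1, 2] * hjStep 2 = 1 := by
    ext i j; fin_cases i <;> fin_cases j <;> simp [hjStep]
  simp only [hjMat_append, hjMat_cons, hjMat_nil, mul_one, hstep, ← mul_assoc, hinv, one_mul]

lemma tMatrix_shorten (d n a : ℤ) :
    !![0, 1; -1, 2] * tMatrix d n a * !![1, 0; 1, 1] = tMatrix d a (2 * a - n) := by
  rw [tMatrix, tMatrix, mul_fin_two, mul_fin_two, EmbeddingLike.apply_eq_iff_eq]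
  simp only [vecCons_inj, and_true]
  refine ⟨⟨?_, ?_⟩, ?_, ?_⟩ <;> ring

lemma eq_one_of_isCoprime_two_mul {a : ℤ} (ha : 0 < a) (h : IsCoprime (2 * a) a) : a = 1 := by
  have := h.isUnit_of_dvd' (dvd_mul_left a 2) dvd_rfl
  rw [Int.isUnit_iff] at this
  omega

def twoChain : ℕ → List ℤ
  | 0 => [4]
  | k + 1 => 3 :: (List.replicate k 2 ++ [3])

lemma hjMat_replicate_two (k : ℕ) :
    hjMat (List.replicate k 2) = !![(k : ℤ) + 1, -k; k, 1 - k] := by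
  induction k with
  | zero => ext i j; fin_cases i <;> fin_cases j <;> rfl
  | succ k ih =>
    rw [List.replicate_succ, hjMat_cons, ih, hjStep, mul_fin_two]
    push_cast
    ring_nf

lemma hjMat_twoChain (k : ℕ) : hjMat (twoChain k) = tMatrix (k + 1) 2 1 := by
  cases k with
  | zero => ext i j; fin_cases i <;> fin_cases j <;> simp [twoChain, hjStep, tMatrix]
  | succ k =>
    rw [twoChain, hjMat_cons, hjMat_append, hjMat_replicate_two, hjMat_cons, hjMat_nil, mul_one,
      hjStep, mul_fin_two, mul_fin_two, tMatrix]
    push_cast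
    ring_nf

lemma length_twoChain (k : ℕ) : (twoChain k).length = k + 1 := by
  cases k <;> simp [twoChain]

lemma two_le_of_mem_twoChain {k : ℕ} {b : ℤ} (hb : b ∈ twoChain k) : 2 ≤ b := by
  cases k <;> simp [twoChain] at hb <;> omega

namespace IsTChain

variable {l : List ℤ} {d n a : ℤ}

lemma reverse (h : IsTChain l d n a) : IsTChain l.reverse d n (n - a) := by
  obtain ⟨hl, hd, ha, han, hna, hM⟩ := isTChain_iff_hjMat.mp h
  refine isTChain_iff_hjMat.mpr ⟨fun b hb => hl b (List.mem_reverse.mp hb), hd, by omega,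
    by omega, by simpa [neg_add_eq_sub] using hna.neg_right.add_mul_left_right 1, ?_⟩
  rw [hjMat_reverse, hM]
  simp [tMatrix]
  ring

lemma head_eq_two {b : ℤ} {u : List ℤ} (h : IsTChain (b :: u) d n a) (hn : 2 < n)
    (h2a : n < 2 * a) : b = 2 := by
  obtain ⟨hl, hd, ha, han, -, hM⟩ := isTChain_iff_hjMat.mp h
  have hbounds := (hjMat_cons_bounds (b := b) fun c hc => hl c (List.mem_cons_of_mem b hc)).1
  simp only [hM, tMatrix, of_apply, cons_val_zero, cons_val_one] at hbounds
  by_contra hb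
  have hb3 : 3 ≤ b := by have := hl b List.mem_cons_self; omega
  have hdn : 3 ≤ d * n := by nlinarith
  have hdn2a : 3 ≤ d * n * (2 * a - n) := by nlinarith
  nlinarith [mul_nonneg (sub_nonneg.2 hb3) (sub_nonneg.2 (two_le_mul_mul hd ha han))]

lemma three_le_head {b : ℤ} {u : List ℤ} (h : IsTChain (b :: u) d n a) (h2a : 2 * a < n) :
    3 ≤ b := by
  obtain ⟨hl, hd, ha, han, -, hM⟩ := isTChain_iff_hjMat.mp h
  have hbounds := (hjMat_cons_bounds (b := b) fun c hc => hl c (List.mem_cons_of_mem b hc)).2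
  simp only [hM, tMatrix, of_apply, cons_val_zero, cons_val_one] at hbounds
  by_contra hb
  obtain rfl : b = 2 := by have := hl b List.mem_cons_self; omega
  have : 0 ≤ d * n * (n - 2 * a) := mul_nonneg (by nlinarith) (by omega)
  linarith

lemma exists_shorten (h : IsTChain l d n a) (hn : 2 < n) (h2a : n < 2 * a) :
    ∃ l', IsTChain l' d a (2 * a - n) ∧ l'.length + 1 = l.length := by
  obtain ⟨b, u, rfl⟩ := List.exists_cons_of_ne_nil h.1
  obtain rfl := h.head_eq_two hn h2a
  have hrev : 2 * (n - a) < n := by omega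
  obtain ⟨s, x, rfl⟩ : ∃ s x, u = s ++ [x] := by
    rcases u.eq_nil_or_concat' with rfl | hu
    · have := h.reverse.three_le_head hrev
      omega
    · exact hu
  have hx : 3 ≤ x := by
    have hr := h.reverse
    rw [show (2 :: (s ++ [x])).reverse = x :: (s.reverse ++ [2]) by simp] at hr
    exact hr.three_le_head hrev
  obtain ⟨hl, hd, ha, han, hna, hM⟩ := isTChain_iff_hjMat.mp h
  refine ⟨s ++ [x - 1], isTChain_iff_hjMat.mpr ⟨?_, hd, by omega, by omega, ?_, ?_⟩, by simp⟩
  · intro c hc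
    rcases List.mem_append.mp hc with hc | hc
    · exact hl c (by simp [hc])
    · rw [List.mem_singleton.mp hc]; omega
  · simpa [sub_eq_neg_add, mul_comm] using hna.symm.neg_right.add_mul_left_right 2
  · rw [hjMat_shorten, hM, tMatrix_shorten]

lemma eq_twoChain (h : IsTChain l d 2 a) : l = twoChain (d - 1).toNat := by
  obtain ⟨hl, hd, ha, han, -, hM⟩ := isTChain_iff_hjMat.mp h
  obtain rfl : a = 1 := by omega
  refine eq_of_hjMat_eq hl (fun b => two_le_of_mem_twoChain) ?_
  rw [hM, hjMat_twoChain, Int.toNat_of_nonneg (by omega), sub_add_cancel]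

lemma length_eq (h : IsTChain l d 2 a) : (l.length : ℤ) = d := by
  have hd : 1 ≤ d := h.2.2.1
  rw [h.eq_twoChain, length_twoChain]
  omega

lemma eq_two_of_eq_twoChain {k : ℕ} (h : IsTChain l d n a) (hk : l = twoChain k) : n = 2 := by
  obtain ⟨-, hd, ha, han, hna, hM⟩ := isTChain_iff_hjMat.mp h
  rw [hk, hjMat_twoChain] at hM
  have h00 := congrFun (congrFun hM 0) 0
  have h10 := congrFun (congrFun hM 1) 0
  simp only [tMatrix, of_apply, cons_val_zero, cons_val_one] at h00 h10
  have h2a : n = 2 * a := by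
    have h0 : d * n * (n - 2 * a) = 0 := by linear_combination -h00 + 2 * h10
    have hdn : d * n ≠ 0 := by nlinarith
    linarith [(mul_eq_zero.mp h0).resolve_left hdn]
  subst h2a
  have := eq_one_of_isCoprime_two_mul ha hna
  omega

lemma lt_length (h : IsTChain l d n a) (hn : 2 < n) : d < l.length := by
  induction hlen : l.length using Nat.strong_induction_on generalizing l n a with
  | _ r ih =>
  wlog h2a : n < 2 * a generalizing l a
  · have hne : n ≠ 2 * a := by
      rintro rfl
      obtain ⟨-, -, ha, -, hna, -⟩ := isTChain_iff_hjMat.mp h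
      have := eq_one_of_isCoprime_two_mul ha hna
      omega
    exact this h.reverse (by simpa using hlen) (by omega)
  obtain ⟨l', h', hl'⟩ := h.exists_shorten hn h2a
  rcases (show a = 2 ∨ 2 < a by omega) with rfl | ha
  · have := h'.length_eq
    omega
  · have := ih l'.length (by omega) h' ha rfl
    omega

end IsTChain

lemma exists_eq_twoChain_iff {l : List ℤ} :
    (∃ k, l = twoChain k) ↔ l = [4] ∨ ∃ k : ℕ, l = 3 :: (List.replicate k 2 ++ [3]) := by
  constructor
  · rintro ⟨_ | k, rfl⟩
    exacts [.inl rfl, .inr ⟨k, rfl⟩]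
  · rintro (rfl | ⟨k, rfl⟩)
    exacts [⟨0, rfl⟩, ⟨k + 1, rfl⟩]

/-- For a T-chain with parameters (d, n, a) of length r: d ≤ r, and
d = r ↔ n = 2 ↔ the chain is [4] or [3, 2^{r−2}, 3]. -/
theorem tchain_d_le_r (l : List ℤ) (d n a : ℤ) (h : IsTChain l d n a) :
    d ≤ (l.length : ℤ) ∧
    (d = (l.length : ℤ) ↔ n = 2) ∧
    (n = 2 ↔ (l = [4] ∨ ∃ k : ℕ, l = 3 :: (List.replicate k 2 ++ [3]))) := by
  have hn : 2 ≤ n := h.2.2.2.1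
  refine ⟨?_, ⟨fun hd => ?_, fun hn2 => ?_⟩, ?_⟩
  · rcases hn.eq_or_lt with rfl | hn
    exacts [h.length_eq.ge, (h.lt_length hn).le]
  · by_contra hn2
    exact (h.lt_length (by omega)).ne hd
  · subst hn2
    exact h.length_eq.symm
  · rw [← exists_eq_twoChain_iff]
    constructor
    · rintro rfl
      exact ⟨_, h.eq_twoChain⟩
    · rintro ⟨k, hk⟩
      exact h.eq_two_of_eq_twoChain hk
end

section
/- For every integer s ≥ 1, the chain [2^s, s+4, 2^{s−1}, s+2] (s entries 2, then one entry s+4, then s−1 entries 2, then one entry s+2, of length r = 2s+1) has Hirzebruch–Jung continued fraction (s²+2s+2)² / ((s²+2s+2)(s²+s+1) − 1); hence it is a T-chain with parameters (d, n, a) = (1, s²+2s+2, s²+s+1). (For s = 1 this is the chain [2,5,3] of the paper's Kodaira dimension 1 classification, and for s = 2 it is the chain [2,2,6,2,4] of the Kodaira dimension 0 classification.) -/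
/-! Evaluate the chain from the right, keeping its value as a fraction `p / q`: prepending `b`
sends `p / q` to `(b p - q) / p`, so a block of `k` twos sends it to
`((k + 1) p - k q) / (k p - (k - 1) q)`. Along `[2^s, s+4, 2^{s-1}, s+2]` this gives
`s + 2`, then `(s² + s + 1) / s²`, then `(s³ + 4s² + 5s + 4) / (s² + s + 1)`, and finally
`n² / (n a - 1)` with `n = s² + 2s + 2`, `a = s² + s + 1`; coprimality is `(s + 1) a - s n = 1`. -/

theorem hjcf_cons_of_eq_div {l : List ℤ} {p q : ℚ} (h : hjcf l = p / q) (hp : p ≠ 0)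
    (b : ℤ) : hjcf (b :: l) = (b * p - q) / p := by
  rw [hjcf, h, inv_div, eq_div_iff hp, sub_mul, div_mul_cancel₀ q hp]

theorem hjcf_replicate_two_append {l : List ℤ} {p q : ℚ} (h : hjcf l = p / q)
    (hq : 0 < q) (hqp : q < p) (k : ℕ) :
    hjcf (List.replicate k 2 ++ l) = ((k + 1) * p - k * q) / (k * p - (k - 1) * q) := by
  induction k with
  | zero => simpa using h
  | succ k ih =>
    have hnum : (k + 1) * p - k * q ≠ 0 := by
      have : (0 : ℚ) ≤ k := k.cast_nonneg
      nlinarith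
    rw [List.replicate_succ, List.cons_append, hjcf_cons_of_eq_div ih hnum]
    push_cast
    congr 1 <;> ring

theorem hjcf_typeI_chain (s : ℕ) (hs : 1 ≤ s) :
    hjcf (List.replicate s 2 ++ ((s : ℤ) + 4) ::
        (List.replicate (s - 1) 2 ++ [(s : ℤ) + 2])) =
      ((s : ℚ) ^ 2 + 2 * s + 2) ^ 2 /
        (((s : ℚ) ^ 2 + 2 * s + 2) * ((s : ℚ) ^ 2 + s + 1) - 1) := by
  have hs' : (1 : ℚ) ≤ s := by exact_mod_cast hs
  have hlast : hjcf [(s : ℤ) + 2] = ((s : ℚ) + 2) / 1 := by simp [hjcf]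
  have hmiddle : hjcf (List.replicate (s - 1) 2 ++ [(s : ℤ) + 2]) =
      ((s : ℚ) ^ 2 + s + 1) / (s : ℚ) ^ 2 := by
    rw [hjcf_replicate_two_append hlast one_pos (by linarith), Nat.cast_sub hs]
    push_cast
    congr 1 <;> ring
  have hcenter : hjcf (((s : ℤ) + 4) :: (List.replicate (s - 1) 2 ++ [(s : ℤ) + 2])) =
      ((s : ℚ) ^ 3 + 4 * s ^ 2 + 5 * s + 4) / ((s : ℚ) ^ 2 + s + 1) := by
    rw [hjcf_cons_of_eq_div hmiddle (by positivity)]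
    push_cast
    congr 1
    ring
  rw [hjcf_replicate_two_append hcenter (by positivity) (by nlinarith)]
  congr 1 <;> ring

/-- For s ≥ 1, the chain [2^s, s+4, 2^{s−1}, s+2] of length
r = 2s+1 has HJ continued fraction (s²+2s+2)² / ((s²+2s+2)(s²+s+1) − 1), hence
is a T-chain with parameters (1, s²+2s+2, s²+s+1). -/
theorem optimal_chain_typeI (s : ℕ) (hs : 1 ≤ s) :
    let c : List ℤ := List.replicate s 2 ++ ((s : ℤ) + 4) ::
      (List.replicate (s - 1) 2 ++ [(s : ℤ) + 2])
    c.length = 2 * s + 1 ∧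
    hjcf c = ((s : ℚ) ^ 2 + 2 * s + 2) ^ 2 /
      (((s : ℚ) ^ 2 + 2 * s + 2) * ((s : ℚ) ^ 2 + s + 1) - 1) ∧
    IsTChain c 1 ((s : ℤ) ^ 2 + 2 * s + 2) ((s : ℤ) ^ 2 + s + 1) := by
  intro c
  have hval := hjcf_typeI_chain s hs
  have hentries : ∀ b ∈ c, 2 ≤ b := by
    intro b hb
    simp only [c, List.mem_append, List.mem_cons, List.mem_replicate, List.not_mem_nil,
      or_false] at hb
    rcases hb with ⟨-, rfl⟩ | rfl | ⟨-, rfl⟩ | rfl <;> omega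
  have hcoprime : Int.gcd ((s : ℤ) ^ 2 + 2 * s + 2) ((s : ℤ) ^ 2 + s + 1) = 1 :=
    Int.isCoprime_iff_gcd_eq_one.mp ⟨-s, s + 1, by ring⟩
  refine ⟨by simp only [c, List.length_append, List.length_cons, List.length_replicate,
    List.length_nil]; omega, hval, by simp [c], hentries, le_rfl, by nlinarith,
    by positivity, by nlinarith, hcoprime, ?_⟩
  rw [hval]
  push_cast
  ring
end
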